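/- arXiv:1205.4643 — 2 statements merged into one kernel-verified Lean document; each statement's English description precedes it below -/
import Mathlib

section
/- Let (Z⁰, Z¹) be a λ-consistent price system: a pair of strictly positive martingales with (1−λ)S_t ≤ Z¹_t/Z⁰_t ≤ S_t for all t. Then for every strategy (φ⁰, φ¹) that is self-financing under transaction costs λ (for S), the process (Z⁰_t φ⁰_{t+1} + Z¹_t φ¹_{t+1})_{t=0}^T is a supermartingale provided it is nonnegative. -/
/-!
Write `V_t = Z⁰_t φ⁰_{t+1} + Z¹_t φ¹_{t+1}`. Trading at time `t + 1` at the bid-ask prices costs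
at least its value at the consistent prices `(Z⁰, Z¹)`, so
`V_{t+1} ≤ Z⁰_{t+1} φ⁰_{t+1} + Z¹_{t+1} φ¹_{t+1}`, and the right-hand side has conditional
expectation `V_t` given `ℱ_t` because `Z⁰, Z¹` are martingales and `φ_{t+1}` is
`ℱ_t`-measurable. As `φ_{t+1}` need not be bounded, this pull-out step is carried out on the
`ℱ_t`-measurable sets where `|φ_{t+1}| ≤ n`, which exhaust `Ω`.
-/

open MeasureTheory Filter

section GeneralizedConditionalExpectation

variable {Ω ι : Type*} [Fintype ι] {m m0 : MeasurableSpace Ω} {μ : Measure Ω}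
  {W U : Ω → ℝ} {ξ D : ι → Ω → ℝ}

theorem condExp_le_of_le_add_sum_mul_of_bounded (hm : m ≤ m0) [SigmaFinite (μ.trim hm)]
    (hW : Integrable W μ) (hU : Integrable U μ) (hUm : StronglyMeasurable[m] U)
    (hξ : ∀ i, StronglyMeasurable[m] (ξ i)) {C : ℝ} (hξC : ∀ i ω, |ξ i ω| ≤ C)
    (hD : ∀ i, Integrable (D i) μ) (hD0 : ∀ i, μ[D i|m] =ᵐ[μ] 0)
    (hle : W ≤ᵐ[μ] U + ∑ i, ξ i * D i) : μ[W|m] ≤ᵐ[μ] U := by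
  have hξD : ∀ i, Integrable (ξ i * D i) μ := fun i =>
    (hD i).bdd_mul ((hξ i).mono hm).aestronglyMeasurable (ae_of_all _ (hξC i))
  have hξD0 : ∀ i, μ[ξ i * D i|m] =ᵐ[μ] 0 := fun i => by
    filter_upwards [condExp_mul_of_stronglyMeasurable_left (hξ i) (hξD i) (hD i), hD0 i]
      with ω h h0
    simp [h, h0]
  have hsum : μ[∑ i, ξ i * D i|m] =ᵐ[μ] 0 := by
    filter_upwards [condExp_finsetSum (s := Finset.univ) (fun i _ => hξD i) m,
      ae_all_iff.2 hξD0] with ω h h0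
    simp [h, Finset.sum_apply, h0]
  calc μ[W|m]
      ≤ᵐ[μ] μ[U + ∑ i, ξ i * D i|m] :=
        condExp_mono hW (hU.add (integrable_finsetSum' _ fun i _ => hξD i)) hle
    _ =ᵐ[μ] μ[U|m] + μ[∑ i, ξ i * D i|m] :=
        condExp_add hU (integrable_finsetSum' _ fun i _ => hξD i) m
    _ =ᵐ[μ] U := by
        filter_upwards [hsum] with ω h
        simp [h, condExp_of_stronglyMeasurable hm hUm hU]

theorem condExp_le_of_le_add_sum_mul (hm : m ≤ m0) [SigmaFinite (μ.trim hm)]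
    (hW : Integrable W μ) (hU : Integrable U μ) (hUm : StronglyMeasurable[m] U)
    (hξ : ∀ i, StronglyMeasurable[m] (ξ i)) (hD : ∀ i, Integrable (D i) μ)
    (hD0 : ∀ i, μ[D i|m] =ᵐ[μ] 0) (hle : W ≤ᵐ[μ] U + ∑ i, ξ i * D i) :
    μ[W|m] ≤ᵐ[μ] U := by
  set A : ℕ → Set Ω := fun n => ⋂ i, {ω | |ξ i ω| ≤ n}
  have hA : ∀ n, MeasurableSet[m] (A n) := fun n =>
    .iInter fun i => (hξ i).norm.measurable measurableSet_Iic
  have hcover : ∀ ω, ∃ n, ω ∈ A n := fun ω => by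
    obtain ⟨n, hn⟩ := exists_nat_ge (∑ i, |ξ i ω|)
    exact ⟨n, Set.mem_iInter.2 fun i =>
      (Finset.single_le_sum (fun j _ => abs_nonneg (ξ j ω)) (Finset.mem_univ i)).trans hn⟩
  have hloc : ∀ n, (A n).indicator (μ[W|m]) ≤ᵐ[μ] (A n).indicator U := fun n => by
    refine (condExp_indicator hW (hA n)).symm.le.trans <|
      condExp_le_of_le_add_sum_mul_of_bounded hm (hW.indicator (hm _ (hA n)))
        (hU.indicator (hm _ (hA n))) (hUm.indicator (hA n))
        (ξ := fun i => (A n).indicator (ξ i)) (fun i => (hξ i).indicator (hA n)) (C := n)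
        (fun i ω => ?_) hD hD0 ?_
    · by_cases hω : ω ∈ A n
      · simpa [Set.indicator_of_mem hω] using Set.mem_iInter.1 hω i
      · simp [Set.indicator_of_notMem hω]
    · filter_upwards [hle] with ω h
      by_cases hω : ω ∈ A n
      · simpa [Set.indicator_of_mem hω, Finset.sum_apply] using h
      · simp [Set.indicator_of_notMem hω]
  filter_upwards [ae_all_iff.2 hloc] with ω h
  obtain ⟨n, hn⟩ := hcover ω
  simpa [Set.indicator_of_mem hn] using h n

end GeneralizedConditionalExpectation

section

variable {Ω : Type*} {m0 : MeasurableSpace Ω} {μ : Measure Ω}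

theorem supermartingale_min_of_condExp_succ_le [IsFiniteMeasure μ] {ℱ : Filtration ℕ m0}
    {V : ℕ → Ω → ℝ} {T : ℕ} (hV : StronglyAdapted ℱ V) (hint : ∀ t, Integrable (V t) μ)
    (hle : ∀ t < T, μ[V (t + 1)|ℱ t] ≤ᵐ[μ] V t) :
    Supermartingale (fun t => V (min t T)) ℱ μ := by
  refine supermartingale_nat (fun t => (hV _).mono (ℱ.mono (min_le_left t T)))
    (fun t => hint _) fun t => ?_
  rcases lt_or_ge t T with ht | ht
  · simpa [min_eq_left ht.le, min_eq_left (Nat.succ_le_of_lt ht)] using hle t ht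
  · simp only [min_eq_right ht, min_eq_right (ht.trans t.le_succ)]
    rw [condExp_of_stronglyMeasurable (ℱ.le t) ((hV T).mono (ℱ.mono ht)) (hint T)]

theorem Martingale.condExp_succ_sub_eq_zero {E : Type*} [NormedAddCommGroup E]
    [NormedSpace ℝ E] [CompleteSpace E] {ℱ : Filtration ℕ m0} {Z : ℕ → Ω → E}
    (hZ : Martingale Z ℱ μ) (t : ℕ) : μ[Z (t + 1) - Z t|ℱ t] =ᵐ[μ] 0 := by
  filter_upwards [condExp_sub (hZ.integrable (t + 1)) (hZ.integrable t) (ℱ t),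
    hZ.condExp_ae_eq t.le_succ, hZ.condExp_ae_eq (le_refl t)] with ω h h1 h2
  simp [h, h1, h2]

end

theorem trade_value_nonpos_of_mem_spread {l s z0 z1 a b : ℝ} (hz0 : 0 < z0)
    (hbid : (1 - l) * s ≤ z1 / z0) (hask : z1 / z0 ≤ s)
    (hsf : a ≤ -b⁺ * s + b⁻ * ((1 - l) * s)) : z0 * a + z1 * b ≤ 0 := by
  rw [le_div_iff₀ hz0] at hbid
  rw [div_le_iff₀ hz0] at hask
  rw [← posPart_sub_negPart b]
  nlinarith [mul_le_mul_of_nonneg_left hsf hz0.le, posPart_nonneg b, negPart_nonneg b,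
    mul_nonneg (posPart_nonneg b) (sub_nonneg.2 hask),
    mul_nonneg (negPart_nonneg b) (sub_nonneg.2 hbid)]

theorem stmt_10_general {Ω : Type*} {m0 : MeasurableSpace Ω} {μ : Measure Ω} [IsProbabilityMeasure μ]
    (ℱ : Filtration ℕ m0) (T : ℕ) (l : ℝ)
    (S Z0 Z1 : ℕ → Ω → ℝ) (φ0 φ1 : ℕ → Ω → ℝ)
    (hZ0 : Martingale Z0 ℱ μ) (hZ1 : Martingale Z1 ℱ μ)
    (hZ0pos : ∀ t ω, 0 < Z0 t ω)
    (hspread : ∀ t ≤ T, ∀ ω, (1 - l) * S t ω ≤ Z1 t ω / Z0 t ω ∧ Z1 t ω / Z0 t ω ≤ S t ω)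
    (hpred : ∀ t, StronglyMeasurable[ℱ t] (φ0 (t + 1)) ∧ StronglyMeasurable[ℱ t] (φ1 (t + 1)))
    (hsf : ∀ t ≤ T, ∀ ω, φ0 (t + 1) ω - φ0 t ω ≤
        -(φ1 (t + 1) ω - φ1 t ω)⁺ * S t ω + (φ1 (t + 1) ω - φ1 t ω)⁻ * ((1 - l) * S t ω))
    (hint : ∀ t, Integrable (fun ω => Z0 t ω * φ0 (t + 1) ω + Z1 t ω * φ1 (t + 1) ω) μ) :
    Supermartingale (fun t ω => Z0 (min t T) ω * φ0 (min t T + 1) ω +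
      Z1 (min t T) ω * φ1 (min t T + 1) ω) ℱ μ := by
  set V : ℕ → Ω → ℝ := fun t ω => Z0 t ω * φ0 (t + 1) ω + Z1 t ω * φ1 (t + 1) ω
  have hV : StronglyAdapted ℱ V := fun t =>
    ((hZ0.stronglyAdapted t).mul (hpred t).1).add ((hZ1.stronglyAdapted t).mul (hpred t).2)
  refine supermartingale_min_of_condExp_succ_le hV hint fun t ht => ?_
  have hZ : ∀ i, Martingale (![Z0, Z1] i) ℱ μ := Fin.forall_fin_two.2 ⟨hZ0, hZ1⟩
  refine condExp_le_of_le_add_sum_mul (ℱ.le t) (hint (t + 1)) (hint t) (hV t)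
    (ξ := fun i => ![φ0, φ1] i (t + 1)) (D := fun i => ![Z0, Z1] i (t + 1) - ![Z0, Z1] i t)
    (Fin.forall_fin_two.2 (hpred t)) (fun i => ((hZ i).integrable _).sub ((hZ i).integrable _))
    (fun i => Martingale.condExp_succ_sub_eq_zero (hZ i) t) (ae_of_all _ fun ω => ?_)
  obtain ⟨hbid, hask⟩ := hspread (t + 1) ht ω
  have := trade_value_nonpos_of_mem_spread (hZ0pos (t + 1) ω) hbid hask (hsf (t + 1) ht ω)
  simp only [V, Fin.sum_univ_two, Matrix.cons_val_zero, Matrix.cons_val_one, Pi.add_apply,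
    Pi.mul_apply, Pi.sub_apply]
  linarith

/-- For a λ-consistent price system `(Z⁰, Z¹)` and a self-financing strategy under
transaction costs, the nonnegative valued process `Z⁰_t φ⁰_{t+1} + Z¹_t φ¹_{t+1}` is a
supermartingale. -/
theorem stmt_10 {Ω : Type*} {m0 : MeasurableSpace Ω} {μ : Measure Ω} [IsProbabilityMeasure μ]
    (ℱ : Filtration ℕ m0) (T : ℕ) (l : ℝ) (hl : l ∈ Set.Ioo (0 : ℝ) 1)
    (S Z0 Z1 : ℕ → Ω → ℝ) (φ0 φ1 : ℕ → Ω → ℝ)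
    (hZ0 : Martingale Z0 ℱ μ) (hZ1 : Martingale Z1 ℱ μ)
    (hZ0pos : ∀ t ω, 0 < Z0 t ω) (hZ1pos : ∀ t ω, 0 < Z1 t ω)
    (hspread : ∀ t ≤ T, ∀ ω, (1 - l) * S t ω ≤ Z1 t ω / Z0 t ω ∧ Z1 t ω / Z0 t ω ≤ S t ω)
    (hpred : ∀ t, StronglyMeasurable[ℱ t] (φ0 (t + 1)) ∧ StronglyMeasurable[ℱ t] (φ1 (t + 1)))
    (hsf : ∀ t ≤ T, ∀ ω, φ0 (t + 1) ω - φ0 t ω ≤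
        -(φ1 (t + 1) ω - φ1 t ω)⁺ * S t ω + (φ1 (t + 1) ω - φ1 t ω)⁻ * ((1 - l) * S t ω))
    (hnonneg : ∀ t ω, 0 ≤ Z0 t ω * φ0 (t + 1) ω + Z1 t ω * φ1 (t + 1) ω)
    (hint : ∀ t, Integrable (fun ω => Z0 t ω * φ0 (t + 1) ω + Z1 t ω * φ1 (t + 1) ω) μ) :
    Supermartingale (fun t ω => Z0 (min t T) ω * φ0 (min t T + 1) ω +
      Z1 (min t T) ω * φ1 (min t T + 1) ω) ℱ μ :=
  stmt_10_general ℱ T l S Z0 Z1 φ0 φ1 hZ0 hZ1 hZ0pos hspread hpred hsf hint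
end

section
/- Let λ ∈ (0,1) and n ∈ ℕ. For an investor with wealth w > 0 (cash plus shares valued at price S₁ = 1 + 1/n) and current holding φ¹ > 0, whose next-period bid price is 3 (= (1−λ)·3/(1−λ)) with probability p_{n,1} and 1 + 1/(n+1) with probability 1 − p_{n,1}, the log-optimal total risky holding equals w·((1+λ)/(λ + 1/n))·(1/(1+λ) + q₁/n), where p_{n,1} = (1 + n(2+n)λ)((2n−1)q₁(1+λ) + n²(2+λ))/(n²(1+nλ)(1+2λ+n(2+λ))). -/
/-!
The objective `θ ↦ p log (w + θ a) + (1 - p) log (w + θ b)` is concave, so an admissible `θ₀`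
at which its derivative `p a / (w + θ₀ a) + (1 - p) b / (w + θ₀ b)` vanishes is a maximiser.
At this node, with `K = 1 + N(N+2)l`, `M = (2N-1)q₁(1+l) + N²(2+l)` and
`D = N²(1-l) - q₁(1+l)K`, everything factors: `a = (2N-1)/N`, `b = -K/(N(N+1))`,
`p ∝ K M`, `1 - p ∝ (2N-1) D`, and the two terminal wealths are proportional to `M` and `D`,
so the first-order condition becomes an identity. The bound on `q₁` makes `D` positive, which
gives both `p ≤ 1` and a positive down-state wealth.
-/

open Real

theorem log_sub_log_le_div {x y : ℝ} (hx : 0 < x) (hy : 0 < y) :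
    log x - log y ≤ (x - y) / y := by
  have h := log_le_sub_one_of_pos (div_pos hx hy)
  rwa [log_div hx.ne' hy.ne', div_sub_one hy.ne'] at h

theorem two_point_log_le_of_foc {p a b w θ₀ θ : ℝ} (hp₀ : 0 ≤ p) (hp₁ : p ≤ 1)
    (ha₀ : 0 < w + θ₀ * a) (hb₀ : 0 < w + θ₀ * b)
    (hfoc : p * a * (w + θ₀ * b) + (1 - p) * b * (w + θ₀ * a) = 0)
    (ha : 0 < w + θ * a) (hb : 0 < w + θ * b) :
    p * log (w + θ * a) + (1 - p) * log (w + θ * b) ≤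
      p * log (w + θ₀ * a) + (1 - p) * log (w + θ₀ * b) := by
  have hup := mul_le_mul_of_nonneg_left (log_sub_log_le_div ha ha₀) hp₀
  have hdown := mul_le_mul_of_nonneg_left (log_sub_log_le_div hb hb₀) (sub_nonneg.2 hp₁)
  have hsum : p * ((w + θ * a - (w + θ₀ * a)) / (w + θ₀ * a)) +
      (1 - p) * ((w + θ * b - (w + θ₀ * b)) / (w + θ₀ * b)) = 0 := by
    calc
      _ = (θ - θ₀) * (p * a * (w + θ₀ * b) + (1 - p) * b * (w + θ₀ * a)) /
          ((w + θ₀ * a) * (w + θ₀ * b)) := by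
        rw [mul_div_assoc', mul_div_assoc', div_add_div _ _ ha₀.ne' hb₀.ne']
        ring
      _ = 0 := by rw [hfoc, mul_zero, zero_div]
  linarith

noncomputable section Node

variable {l q w N : ℝ}

def upProb (l q N : ℝ) : ℝ :=
  (1 + N * (2 + N) * l) * ((2 * N - 1) * q * (1 + l) + N ^ 2 * (2 + l)) /
    (N ^ 2 * (1 + N * l) * (1 + 2 * l + N * (2 + l)))

def optHolding (w l q N : ℝ) : ℝ := w * ((1 + l) / (l + 1 / N)) * (1 / (1 + l) + q / N)

def downMargin (l q N : ℝ) : ℝ := N ^ 2 * (1 - l) - q * (1 + l) * (1 + N * (N + 2) * l)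

def upIncrement (N : ℝ) : ℝ := 3 - (1 + 1 / N)

def downIncrement (l N : ℝ) : ℝ := (1 - l) * (1 + 1 / (N + 1)) - (1 + 1 / N)

theorem upIncrement_eq (hN : 0 < N) : upIncrement N = (2 * N - 1) / N := by
  unfold upIncrement
  field_simp
  ring

theorem downIncrement_eq (hN : 0 < N) :
    downIncrement l N = -(1 + N * (N + 2) * l) / (N * (N + 1)) := by
  have hN₁ : N + 1 ≠ 0 := by positivity
  unfold downIncrement
  field_simp
  ring

theorem optHolding_eq (hl : 0 ≤ l) (hN : 0 < N) :
    optHolding w l q N = w * (N + q * (1 + l)) / (1 + N * l) := by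
  have hl₁ : 1 + l ≠ 0 := by positivity
  have hNl : 1 + N * l ≠ 0 := by positivity
  have hlN : l + 1 / N ≠ 0 := by positivity
  unfold optHolding
  field_simp
  ring

theorem add_optHolding_mul_upIncrement (hl : 0 ≤ l) (hN : 0 < N) :
    w + optHolding w l q N * upIncrement N =
      w * ((2 * N - 1) * q * (1 + l) + N ^ 2 * (2 + l)) / (N * (1 + N * l)) := by
  have hNl : 1 + N * l ≠ 0 := by positivity
  rw [optHolding_eq hl hN, upIncrement_eq hN]
  field_simp
  ring

theorem add_optHolding_mul_downIncrement (hl : 0 ≤ l) (hN : 0 < N) :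
    w + optHolding w l q N * downIncrement l N =
      w * downMargin l q N / (N * (N + 1) * (1 + N * l)) := by
  have hNl : 1 + N * l ≠ 0 := by positivity
  have hN₁ : N + 1 ≠ 0 := by positivity
  rw [optHolding_eq hl hN, downIncrement_eq hN, downMargin]
  field_simp
  ring

theorem one_sub_upProb (hl : 0 ≤ l) (hN : 0 < N) :
    1 - upProb l q N = (2 * N - 1) * downMargin l q N /
      (N ^ 2 * (1 + N * l) * (1 + 2 * l + N * (2 + l))) := by
  have hden : N ^ 2 * (1 + N * l) * (1 + 2 * l + N * (2 + l)) ≠ 0 := by positivity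
  unfold upProb downMargin
  field_simp
  ring

theorem downMargin_pos (hl : 0 ≤ l) (hq : 0 ≤ q) (hq₁ : q < (1 - l) / (1 + 4 * l + 3 * l ^ 2))
    (hN : 1 ≤ N) : 0 < downMargin l q N := by
  have hq₁' : q * ((1 + l) * (1 + 3 * l)) < 1 - l := by
    rw [lt_div_iff₀ (by positivity)] at hq₁
    linarith
  unfold downMargin
  have hK : 1 + N * (N + 2) * l ≤ N ^ 2 * (1 + 3 * l) := by
    nlinarith [mul_nonneg (sub_nonneg.2 hN) (by linarith : 0 ≤ N + 1),
      mul_nonneg (mul_nonneg (by linarith : 0 ≤ N) hl) (sub_nonneg.2 hN)]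
  nlinarith [mul_le_mul_of_nonneg_left hK (by positivity : 0 ≤ q * (1 + l)),
    mul_lt_mul_of_pos_left hq₁' (by positivity : 0 < N ^ 2)]

theorem upProb_nonneg (hl : 0 ≤ l) (hq : 0 ≤ q) (hN : 1 ≤ N) : 0 ≤ upProb l q N := by
  have : 0 ≤ 2 * N - 1 := by linarith
  unfold upProb
  positivity

theorem upProb_le_one (hl : 0 ≤ l) (hq : 0 ≤ q) (hq₁ : q < (1 - l) / (1 + 4 * l + 3 * l ^ 2))
    (hN : 1 ≤ N) : upProb l q N ≤ 1 := by
  have : 0 ≤ 2 * N - 1 := by linarith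
  have := downMargin_pos hl hq hq₁ hN
  have : 0 ≤ 1 - upProb l q N := by
    rw [one_sub_upProb hl (by linarith)]
    positivity
  linarith

theorem upProb_foc (hl : 0 ≤ l) (hN : 0 < N) :
    upProb l q N * upIncrement N * (w + optHolding w l q N * downIncrement l N) +
      (1 - upProb l q N) * downIncrement l N * (w + optHolding w l q N * upIncrement N) = 0 := by
  rw [add_optHolding_mul_downIncrement hl hN, add_optHolding_mul_upIncrement hl hN,
    one_sub_upProb hl hN, upIncrement_eq hN, downIncrement_eq hN, upProb]
  field_simp
  ring

end Node

theorem stmt_19_general (l q₁ w : ℝ) (n : ℕ) (hn : 1 ≤ n)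
    (hl : l ∈ Set.Ioo (0 : ℝ) 1)
    (hq : q₁ ∈ Set.Ioo (0 : ℝ) ((1 - l) / (1 + 4 * l + 3 * l ^ 2)))
    (hw : 0 < w) :
    letI p : ℝ := (1 + (n : ℝ) * (2 + n) * l) * ((2 * n - 1) * q₁ * (1 + l) + n ^ 2 * (2 + l)) /
      ((n : ℝ) ^ 2 * (1 + n * l) * (1 + 2 * l + n * (2 + l)))
    letI a : ℝ := 3 - (1 + 1 / n)                         -- up-move bid-price increment
    letI b : ℝ := (1 - l) * (1 + 1 / (n + 1)) - (1 + 1 / n)  -- down-move bid-price increment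
    letI θs : ℝ := w * ((1 + l) / (l + 1 / n)) * (1 / (1 + l) + q₁ / n)
    (0 < w + θs * a ∧ 0 < w + θs * b) ∧
      ∀ θ : ℝ, 0 < w + θ * a → 0 < w + θ * b →
        p * Real.log (w + θ * a) + (1 - p) * Real.log (w + θ * b) ≤
          p * Real.log (w + θs * a) + (1 - p) * Real.log (w + θs * b) := by
  obtain ⟨hl, -⟩ := hl
  obtain ⟨hq, hq₁⟩ := hq
  have hN : (1 : ℝ) ≤ n := by exact_mod_cast hn
  have hN₀ : (0 : ℝ) < n := by linarith
  have hup : 0 < w + optHolding w l q₁ n * upIncrement n := by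
    rw [add_optHolding_mul_upIncrement hl.le hN₀]
    have : (0 : ℝ) ≤ 2 * n - 1 := by linarith
    positivity
  have hdown : 0 < w + optHolding w l q₁ n * downIncrement l n := by
    rw [add_optHolding_mul_downIncrement hl.le hN₀]
    have := downMargin_pos hl.le hq.le hq₁ hN
    positivity
  exact ⟨⟨hup, hdown⟩, fun θ => two_point_log_le_of_foc (upProb_nonneg hl.le hq.le hN)
    (upProb_le_one hl.le hq.le hq₁ hN) hup hdown (upProb_foc hl.le hN₀)⟩

/-- Second-period optimization at the node `ω_{n,·}`: with wealth `w > 0`, ask price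
`S₁ = 1 + 1/n`, next-period bid prices `3` (probability `p_{n,1}`) and `(1−λ)(1+1/(n+1))`
(probability `1 − p_{n,1}`), the log-optimal total risky holding is
`w ((1+λ)/(λ+1/n)) (1/(1+λ) + q₁/n)`. -/
theorem stmt_19 (l q₁ w φ1 : ℝ) (n : ℕ) (hn : 1 ≤ n)
    (hl : l ∈ Set.Ioo (0 : ℝ) 1)
    (hq : q₁ ∈ Set.Ioo (0 : ℝ) ((1 - l) / (1 + 4 * l + 3 * l ^ 2)))
    (hw : 0 < w) (hφ1 : 0 < φ1) :
    letI p : ℝ := (1 + (n : ℝ) * (2 + n) * l) * ((2 * n - 1) * q₁ * (1 + l) + n ^ 2 * (2 + l)) /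
      ((n : ℝ) ^ 2 * (1 + n * l) * (1 + 2 * l + n * (2 + l)))
    letI a : ℝ := 3 - (1 + 1 / n)                         -- up-move bid-price increment
    letI b : ℝ := (1 - l) * (1 + 1 / (n + 1)) - (1 + 1 / n)  -- down-move bid-price increment
    letI θs : ℝ := w * ((1 + l) / (l + 1 / n)) * (1 / (1 + l) + q₁ / n)
    (0 < w + θs * a ∧ 0 < w + θs * b) ∧
      ∀ θ : ℝ, 0 < w + θ * a → 0 < w + θ * b →
        p * Real.log (w + θ * a) + (1 - p) * Real.log (w + θ * b) ≤
          p * Real.log (w + θs * a) + (1 - p) * Real.log (w + θs * b) :=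
  stmt_19_general l q₁ w n hn hl hq hw
end
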